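/- The map h_{ν̄,c̄} : H_{ν̄,c̄} → G_ν̄ determined by ĥ(x̂_β) = x_β, ĥ(ẑ_{δ,n}) = z_{δ,n} and ĥ(ŵ) = 0 is a well-defined surjective group homomorphism whose kernel equals H_{ν̄,c̄} ∩ ℤŵ; moreover, if c_δ(n) ≠ 0 for some δ ∈ S and n ∈ ω, then the kernel equals ℤŵ and is infinite cyclic, so that 0 → ℤ → H_{ν̄,c̄} → G_ν̄ → 0 is a short exact sequence of abelian groups. -/

import Mathlib

set_option autoImplicit false
noncomputable section

open Ordinal Cardinal

/-- A ladder on a limit ordinal `δ`: a strictly increasing cofinal sequence of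
successor ordinals below `δ`. -/
structure IsLadder (δ : Ordinal) (η : ℕ → Ordinal) : Prop where
  strictMono : StrictMono η
  isSucc : ∀ n : ℕ, ∃ α : Ordinal, η n = α + 1
  lt_delta : ∀ n : ℕ, η n < δ
  cofinal : ∀ β < δ, ∃ n : ℕ, β < η n

/-- Conditions (a) and (b) for `k` to witness that the ladder `η` is special. -/
def SpecialCond (η : ℕ → Ordinal) (k : ℕ → ℕ) : Prop :=
  ∀ n : ℕ,
    (∀ i < k (n + 1) - k n, ∀ j < k (n + 1) - k n,
      η (k n + i) + Ordinal.omega0 = η (k n + j) + Ordinal.omega0) ∧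
    η (k n) + Ordinal.omega0 < η (k (n + 1))

/-- A club (closed unbounded) subset of `ω₁`. -/
def IsClubBelowOmega1 (C : Set Ordinal) : Prop :=
  (∀ γ ∈ C, γ < ω₁) ∧
  (∀ α < ω₁, ∃ γ ∈ C, α < γ) ∧
  (∀ δ, δ < ω₁ → δ ≠ 0 → (∀ β < δ, ∃ γ ∈ C, β < γ ∧ γ < δ) → δ ∈ C)

/-- A stationary subset of `ω₁`: one meeting every club. -/
def IsStationaryBelowOmega1 (T : Set Ordinal) : Prop :=
  ∀ C : Set Ordinal, IsClubBelowOmega1 C → (T ∩ C).Nonempty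

/-- The standing hypotheses on the set `S`: a stationary, co-stationary subset of `ω₁`
consisting of limit ordinals of cofinality `ω` divisible by `ω²`. -/
structure GoodS (S : Set Ordinal) : Prop where
  stationary : IsStationaryBelowOmega1 S
  costationary : IsStationaryBelowOmega1 ({α : Ordinal | α < ω₁} \ S)
  lt_omega1 : ∀ δ ∈ S, δ < ω₁
  isLimit : ∀ δ ∈ S, δ ≠ 0 ∧ ∀ a < δ, Order.succ a < δ
  cof_eq : ∀ δ ∈ S, Ordinal.cof δ = Cardinal.aleph0
  omega_sq_dvd : ∀ δ ∈ S, Ordinal.omega0 ^ 2 ∣ δ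

/-- A special ladder system on `S`: for each `δ ∈ S` a special ladder `eta δ`
with witnessing sequence `kk δ`. -/
structure LadderSystem (S : Set Ordinal) where
  eta : Ordinal → ℕ → Ordinal
  kk : Ordinal → ℕ → ℕ
  ladder : ∀ δ ∈ S, IsLadder δ (eta δ)
  kk_pos : ∀ δ ∈ S, 0 < kk δ 0
  kk_mono : ∀ δ ∈ S, StrictMono (kk δ)
  special : ∀ δ ∈ S, SpecialCond (eta δ) (kk δ)

/-- Equality of the ω-ranges of two special ladder systems: `rd(η̄) = rd(ν̄)`. -/
def rdEq (S : Set Ordinal) (L M : LadderSystem S) : Prop :=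
  ∀ δ ∈ S, ∀ n : ℕ,
    L.eta δ (L.kk δ n) + Ordinal.omega0 = M.eta δ (M.kk δ n) + Ordinal.omega0

/-- Index type for the basis of the ambient `ℚ`-vector space `F`. -/
abbrev FIdx : Type 1 := Ordinal ⊕ (Ordinal × ℕ)

/-- The ambient `ℚ`-vector space `F`, with basis `x_β` (β an ordinal) and `y_{δ,n}`. -/
abbrev Fsp : Type 1 := FIdx →₀ ℚ

/-- The basis vector `x_β`. -/
def xgen (β : Ordinal) : Fsp := Finsupp.single (Sum.inl β) 1

/-- The basis vector `y_{δ,n}`. -/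
def ygen (δ : Ordinal) (n : ℕ) : Fsp := Finsupp.single (Sum.inr (δ, n)) 1

/-- The elements `z_{δ,n}`, defined by `z_{δ,0} = y_δ` and
`z_{δ,n+1} = ψ(n)⁻¹ (z_{δ,n} + Σ_{l<tₙ^δ} a_l^{δ,n} x_{η_δ(kₙ^δ+l)})`, equivalently
`ψ(n) z_{δ,n+1} = z_{δ,n} + Σ_{l<tₙ^δ} a_l^{δ,n} x_{η_δ(kₙ^δ+l)}`. -/
def zgen (eta : Ordinal → ℕ → Ordinal) (kk : Ordinal → ℕ → ℕ)
    (a : Ordinal → ℕ → ℕ → ℤ) (ψ : ℕ → ℕ) (δ : Ordinal) : ℕ → Fsp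
  | 0 => ygen δ 0
  | n + 1 => ((ψ n : ℚ))⁻¹ •
      (zgen eta kk a ψ δ n +
        ∑ l ∈ Finset.range (kk δ (n + 1) - kk δ n), a δ n l • xgen (eta δ (kk δ n + l)))

/-- All the data needed to build the group `G_η̄`: a special ladder system together with
the function `ψ` (everywhere nonzero) and the coefficients `a_l^{δ,n}` with
`gcd(a_l^{δ,n} : l < tₙ^δ) = 1`. -/
structure GroupData (S : Set Ordinal) extends LadderSystem S where
  a : Ordinal → ℕ → ℕ → ℤ
  psi : ℕ → ℕ
  psi_ne : ∀ n : ℕ, psi n ≠ 0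
  a_gcd : ∀ δ ∈ S, ∀ n : ℕ, (Finset.range (kk δ (n + 1) - kk δ n)).gcd (a δ n) = 1

/-- The group `G_η̄ ≤ (F,+)`, generated by the `x_β` (β < ω₁) and the `z_{δ,n}` (δ ∈ S). -/
def Ggrp (S : Set Ordinal) (D : GroupData S) : AddSubgroup Fsp :=
  AddSubgroup.closure
    ({f : Fsp | ∃ β < ω₁, f = xgen β} ∪
     {f : Fsp | ∃ δ ∈ S, ∃ n : ℕ, f = zgen D.eta D.kk D.a D.psi δ n})

/-- The `ℚ`-subspace `V_α` spanned by the `x_β` (β < α+ω) and `y_{δ,n}` (δ ∈ S ∩ α). -/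
def Vsp (S : Set Ordinal) (α : Ordinal) : Submodule ℚ Fsp :=
  Submodule.span ℚ
    ({f : Fsp | ∃ β < α + Ordinal.omega0, f = xgen β} ∪
     {f : Fsp | ∃ δ ∈ S, δ < α ∧ ∃ n : ℕ, f = ygen δ n})

/-- The pure closure of `H` in `G`: `{g ∈ G : m • g ∈ H for some nonzero integer m}`. -/
def purify (G H : AddSubgroup Fsp) : AddSubgroup Fsp where
  carrier := {g : Fsp | g ∈ G ∧ ∃ m : ℤ, m ≠ 0 ∧ m • g ∈ H}
  zero_mem' := ⟨G.zero_mem, 1, one_ne_zero, by simpa using H.zero_mem⟩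
  add_mem' := by
    rintro g₁ g₂ ⟨hg₁, m₁, hm₁, h₁⟩ ⟨hg₂, m₂, hm₂, h₂⟩
    refine ⟨G.add_mem hg₁ hg₂, m₁ * m₂, mul_ne_zero hm₁ hm₂, ?_⟩
    rw [smul_add]
    exact H.add_mem (by rw [mul_comm, mul_smul]; exact H.zsmul_mem h₁ _)
      (by rw [mul_smul]; exact H.zsmul_mem h₂ _)
  neg_mem' := by
    rintro g ⟨hg, m, hm, h⟩
    exact ⟨G.neg_mem hg, m, hm, by simpa using H.neg_mem h⟩

/-- The canonical filtration `G_η̄^α`: the pure closure in `G_η̄` of `G_η̄ ∩ V_α`. -/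
def Gfil (S : Set Ordinal) (D : GroupData S) (α : Ordinal) : AddSubgroup Fsp :=
  purify (Ggrp S D) ((Vsp S α).toAddSubgroup ⊓ Ggrp S D)

/-- `H` is a direct summand of `G` (both viewed as subgroups of the ambient group). -/
def IsDirectSummandIn (H G : AddSubgroup Fsp) : Prop :=
  H ≤ G ∧ ∃ K : AddSubgroup Fsp, K ≤ G ∧ H ⊓ K = ⊥ ∧ H ⊔ K = G


/-- Index type for the basis of the ambient `ℚ`-vector space `F'` (with the extra vector `ŵ`). -/
abbrev FIdx' : Type 1 := Unit ⊕ FIdx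

/-- The ambient `ℚ`-vector space `F'`, with basis `ŵ`, `x̂_β` and `ŷ_{δ,n}`. -/
abbrev Fsp' : Type 1 := FIdx' →₀ ℚ

/-- The basis vector `ŵ`. -/
def what : Fsp' := Finsupp.single (Sum.inl ()) 1

/-- The basis vector `x̂_β`. -/
def xhat (β : Ordinal) : Fsp' := Finsupp.single (Sum.inr (Sum.inl β)) 1

/-- The basis vector `ŷ_{δ,n}`. -/
def yhat (δ : Ordinal) (n : ℕ) : Fsp' := Finsupp.single (Sum.inr (Sum.inr (δ, n))) 1

/-- The elements `ẑ_{δ,n}`, with `ẑ_{δ,0} = ŷ_δ` and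
`n! ẑ_{δ,n+1} = ẑ_{δ,n} + Σ_{l<tₙ^δ} a_l^{δ,n} x̂_{ν_δ(kₙ^δ+l)} + c_δ(n) ŵ`. -/
def zhat (eta : Ordinal → ℕ → Ordinal) (kk : Ordinal → ℕ → ℕ)
    (a : Ordinal → ℕ → ℕ → ℤ) (c : Ordinal → ℕ → Fin 2) (δ : Ordinal) : ℕ → Fsp'
  | 0 => yhat δ 0
  | n + 1 => ((Nat.factorial n : ℚ))⁻¹ •
      (zhat eta kk a c δ n +
        (∑ l ∈ Finset.range (kk δ (n + 1) - kk δ n), a δ n l • xhat (eta δ (kk δ n + l))) +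
        ((c δ n : ℕ) : ℚ) • what)

/-- The group `H_{ν̄,c̄} ≤ (F',+)`, generated by the `x̂_β` (β < ω₁) and `ẑ_{δ,n}` (δ ∈ S). -/
def Hgrp (S : Set Ordinal) (D : GroupData S) (c : Ordinal → ℕ → Fin 2) : AddSubgroup Fsp' :=
  AddSubgroup.closure
    ({f : Fsp' | ∃ β < ω₁, f = xhat β} ∪
     {f : Fsp' | ∃ δ ∈ S, ∃ n : ℕ, f = zhat D.eta D.kk D.a c δ n})

/-!
The map is the restriction of the coordinate projection `F' → F` forgetting `ŵ`; it sends the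
generators of `H` to those of `G`, so its image is `G`. For the kernel, let `L` be the ℤ-span of
`ŵ` and the `x̂_β`. The recurrence `n! ẑ_{δ,n+1} = ẑ_{δ,n} + Σ a x̂ + c_δ(n) ŵ` shows
`ẑ_{δ,n} ∈ ℤ ẑ_{δ,M} + L` for `n ≤ M`, so every element of `H` lies in `L + Σ_δ ℤ ẑ_{δ,M}` for
some `M`. The only nonzero `ŷ`-coordinate of `ẑ_{δ,M}` is the one at `ŷ_δ`, so an element with
vanishing `F`-coordinates has no `ẑ_{δ,M}`-component and lies in `L`, i.e. in `ℤŵ`. If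
`c_δ(n) = 1`, the same recurrence exhibits `ŵ` as an element of `H`.
-/

open Finset Nat

def forgetW : Fsp' →ₗ[ℚ] Fsp :=
  (LinearMap.snd ℚ _ _).comp (Finsupp.sumFinsuppLEquivProdFinsupp ℚ).toLinearMap

@[simp] lemma forgetW_apply (g : Fsp') (j : FIdx) : forgetW g j = g (Sum.inr j) := rfl

@[simp] lemma forgetW_xhat (β : Ordinal) : forgetW (xhat β) = xgen β := by
  ext j; simp [xhat, xgen, Finsupp.single_apply]

@[simp] lemma forgetW_yhat (δ : Ordinal) (n : ℕ) : forgetW (yhat δ n) = ygen δ n := by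
  ext j; simp [yhat, ygen, Finsupp.single_apply]

@[simp] lemma forgetW_what : forgetW what = 0 := by
  ext j; simp [what]

lemma what_ne_zero : what ≠ 0 := Finsupp.single_ne_zero.2 one_ne_zero

section zhat

variable (eta : Ordinal → ℕ → Ordinal) (kk : Ordinal → ℕ → ℕ)
  (a : Ordinal → ℕ → ℕ → ℤ)

lemma forgetW_zhat (c : Ordinal → ℕ → Fin 2) (δ : Ordinal) (n : ℕ) :
    forgetW (zhat eta kk a c δ n) = zgen eta kk a Nat.factorial δ n := by
  induction n with
  | zero => simp [zhat, zgen]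
  | succ n ih => simp [zhat, zgen, ih, map_sum]

variable (c : Ordinal → ℕ → Fin 2)

lemma factorial_nsmul_zhat_succ (δ : Ordinal) (n : ℕ) :
    n ! • zhat eta kk a c δ (n + 1) = zhat eta kk a c δ n +
      ∑ l ∈ range (kk δ (n + 1) - kk δ n), a δ n l • xhat (eta δ (kk δ n + l)) +
      (c δ n : ℕ) • what := by
  rw [zhat, ← Nat.cast_smul_eq_nsmul ℚ, smul_inv_smul₀ (by positivity),
    Nat.cast_smul_eq_nsmul]

lemma zhat_apply_yhat_zero (δ δ' : Ordinal) (n : ℕ) :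
    zhat eta kk a c δ n (Sum.inr (Sum.inr (δ', 0))) =
      if δ' = δ then (∏ i ∈ range n, (i ! : ℚ))⁻¹ else 0 := by
  induction n with
  | zero => simp [zhat, yhat, Finsupp.single_apply, eq_comm]
  | succ n ih =>
    simp [zhat, ih, xhat, what, prod_range_succ]

/-- The ℤ-span of `ŵ` and all the `x̂_β`, described by its coordinates. -/
def xwLattice : AddSubgroup Fsp' where
  carrier := {f | (∀ i, ∃ k : ℤ, f i = k) ∧ ∀ p, f (Sum.inr (Sum.inr p)) = 0}
  zero_mem' := ⟨fun _ => ⟨0, by simp⟩, fun _ => rfl⟩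
  add_mem' := by
    rintro f g ⟨hf, hf'⟩ ⟨hg, hg'⟩
    refine ⟨fun i => ?_, fun p => by simp [hf', hg']⟩
    obtain ⟨k, hk⟩ := hf i
    obtain ⟨l, hl⟩ := hg i
    exact ⟨k + l, by simp [hk, hl]⟩
  neg_mem' := by
    rintro f ⟨hf, hf'⟩
    refine ⟨fun i => ?_, fun p => by simp [hf']⟩
    obtain ⟨k, hk⟩ := hf i
    exact ⟨-k, by simp [hk]⟩

lemma xhat_mem_xwLattice (β : Ordinal) : xhat β ∈ xwLattice :=
  ⟨fun i => ⟨if Sum.inr (Sum.inl β) = i then 1 else 0,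
    by simp [xhat, Finsupp.single_apply, apply_ite]⟩,
    fun p => by simp [xhat]⟩

lemma what_mem_xwLattice : what ∈ xwLattice :=
  ⟨fun i => ⟨if Sum.inl () = i then 1 else 0,
    by simp [what, Finsupp.single_apply, apply_ite]⟩,
    fun p => by simp [what]⟩

lemma exists_eq_zsmul_what_of_mem_xwLattice {f : Fsp'} (hf : f ∈ xwLattice)
    (h0 : ∀ j, f (Sum.inr j) = 0) : ∃ k : ℤ, f = k • what := by
  obtain ⟨k, hk⟩ := hf.1 (Sum.inl ())
  refine ⟨k, Finsupp.ext ?_⟩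
  rintro (⟨⟩ | j)
  · simp [hk, what]
  · simp [h0, what]

def zhatLevel (M : ℕ) : AddSubgroup Fsp' :=
  xwLattice ⊔ AddSubgroup.closure (Set.range fun δ => zhat eta kk a c δ M)

lemma zhat_mem_zhatLevel (δ : Ordinal) (M : ℕ) :
    zhat eta kk a c δ M ∈ zhatLevel eta kk a c M :=
  AddSubgroup.mem_sup_right (AddSubgroup.subset_closure ⟨δ, rfl⟩)

lemma zhatLevel_mono : Monotone (zhatLevel eta kk a c) := by
  refine monotone_nat_of_le_succ fun M => sup_le le_sup_left ?_
  rw [AddSubgroup.closure_le, Set.range_subset_iff]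
  intro δ
  have hrec := factorial_nsmul_zhat_succ eta kk a c δ M
  rw [add_assoc] at hrec
  rw [SetLike.mem_coe, eq_sub_of_add_eq hrec.symm]
  refine sub_mem (nsmul_mem (zhat_mem_zhatLevel eta kk a c δ (M + 1)) _)
    (AddSubgroup.mem_sup_left (add_mem ?_ (nsmul_mem what_mem_xwLattice _)))
  exact sum_mem fun l _ => zsmul_mem (xhat_mem_xwLattice _) _

lemma exists_eq_zsmul_what_of_mem_zhatLevel {M : ℕ} {g : Fsp'}
    (hg : g ∈ zhatLevel eta kk a c M) (h0 : ∀ j, g (Sum.inr j) = 0) :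
    ∃ k : ℤ, g = k • what := by
  obtain ⟨l, hl, z, hz, rfl⟩ := AddSubgroup.mem_sup.1 hg
  obtain ⟨m, rfl⟩ := AddSubgroup.mem_closure_range_iff.1 hz
  suffices hm : m = 0 by
    subst hm
    exact exists_eq_zsmul_what_of_mem_xwLattice (by simpa using hl) (by simpa using h0)
  ext δ
  have hδ := h0 (Sum.inr (δ, 0))
  rw [Finsupp.add_apply, hl.2, zero_add, Finsupp.sum, Finsupp.finsetSum_apply,
    sum_eq_single δ] at hδ
  · simpa [zhat_apply_yhat_zero, prod_eq_zero_iff, Nat.factorial_ne_zero] using hδ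
  · intro δ' _ hne
    simp [zhat_apply_yhat_zero, Ne.symm hne]
  · intro hδm
    simp [Finsupp.notMem_support_iff.1 hδm]

end zhat

section Hgrp

variable {S : Set Ordinal} (D : GroupData S) (c : Ordinal → ℕ → Fin 2)

lemma Hgrp_le_iSup_zhatLevel : Hgrp S D c ≤ ⨆ M, zhatLevel D.eta D.kk D.a c M := by
  rw [Hgrp, AddSubgroup.closure_le]
  rintro f (⟨β, -, rfl⟩ | ⟨δ, -, n, rfl⟩)
  · exact le_iSup (zhatLevel D.eta D.kk D.a c) 0
      (AddSubgroup.mem_sup_left (xhat_mem_xwLattice β))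
  · exact le_iSup (zhatLevel D.eta D.kk D.a c) n (zhat_mem_zhatLevel _ _ _ _ δ n)

lemma exists_eq_zsmul_what_of_mem_Hgrp {g : Fsp'} (hg : g ∈ Hgrp S D c)
    (h0 : forgetW g = 0) : ∃ k : ℤ, g = k • what := by
  obtain ⟨M, hM⟩ := (AddSubgroup.mem_iSup_of_directed
    (zhatLevel_mono D.eta D.kk D.a c).directed_le).1 (Hgrp_le_iSup_zhatLevel D c hg)
  exact exists_eq_zsmul_what_of_mem_zhatLevel _ _ _ _ hM fun j => by
    simpa using DFunLike.congr_fun h0 j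

lemma map_forgetW_Hgrp (hpsi : D.psi = Nat.factorial) :
    (Hgrp S D c).map forgetW.toAddMonoidHom = Ggrp S D := by
  rw [Hgrp, AddMonoidHom.map_closure, Set.image_union, Ggrp, hpsi]
  congr 1
  ext f
  simp [forgetW_zhat, eq_comm]

lemma what_mem_Hgrp (hS : GoodS S) {δ : Ordinal} (hδ : δ ∈ S) {n : ℕ} (hc : c δ n ≠ 0) :
    what ∈ Hgrp S D c := by
  have hzhat : ∀ m, zhat D.eta D.kk D.a c δ m ∈ Hgrp S D c :=
    fun m => AddSubgroup.subset_closure (Or.inr ⟨δ, hδ, m, rfl⟩)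
  have hxhat : ∀ i, xhat (D.eta δ i) ∈ Hgrp S D c := fun i =>
    AddSubgroup.subset_closure (Or.inl ⟨_, ((D.ladder δ hδ).lt_delta i).trans
      (hS.lt_omega1 δ hδ), rfl⟩)
  have hc1 : (c δ n : ℕ) = 1 := by omega
  have hrec := factorial_nsmul_zhat_succ D.eta D.kk D.a c δ n
  rw [hc1, one_smul, ← sub_eq_iff_eq_add'] at hrec
  rw [← hrec]
  exact sub_mem (nsmul_mem (hzhat _) _)
    (add_mem (hzhat _) (sum_mem fun l _ => zsmul_mem (hxhat _) _))

end Hgrp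

lemma AddMonoidHom.nonempty_ker_addEquiv_int {A B : Type*} [AddGroup A] [AddGroup B]
    (f : A →+ B) {w : A} (hw : ∀ m : ℤ, m • w = 0 → m = 0)
    (hker : ∀ x, f x = 0 ↔ ∃ m : ℤ, x = m • w) : Nonempty (f.ker ≃+ ℤ) := by
  have hrange : (zmultiplesHom A w).range = f.ker := by
    ext x
    simp [hker, AddSubgroup.mem_zmultiples_iff, eq_comm]
  have hinj : Function.Injective (zmultiplesHom A w) :=
    (injective_iff_map_eq_zero _).2 hw
  exact ⟨((AddMonoidHom.ofInjective hinj).trans (AddEquiv.addSubgroupCongr hrange)).symm⟩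

theorem statement17 (S : Set Ordinal) (hS : GoodS S) (D : GroupData S)
    (hpsi : D.psi = Nat.factorial) (c : Ordinal → ℕ → Fin 2) :
    ∃ h : ↥(Hgrp S D c) →+ ↥(Ggrp S D),
      (∀ (β : Ordinal), β < ω₁ → ∀ (hmem : xhat β ∈ Hgrp S D c),
        ((h ⟨xhat β, hmem⟩ : ↥(Ggrp S D)) : Fsp) = xgen β) ∧
      (∀ δ ∈ S, ∀ (n : ℕ) (hmem : zhat D.eta D.kk D.a c δ n ∈ Hgrp S D c),
        ((h ⟨zhat D.eta D.kk D.a c δ n, hmem⟩ : ↥(Ggrp S D)) : Fsp)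
          = zgen D.eta D.kk D.a D.psi δ n) ∧
      (∀ (g : ↥(Hgrp S D c)) (m : ℤ), (g : Fsp') = m • what → h g = 0) ∧
      Function.Surjective h ∧
      (∀ g : ↥(Hgrp S D c), (h g = 0 ↔ ∃ m : ℤ, (g : Fsp') = m • what)) ∧
      ((∃ δ ∈ S, ∃ n : ℕ, c δ n ≠ 0) →
        what ∈ Hgrp S D c ∧ Nonempty (↥h.ker ≃+ ℤ)) := by
  let h : Hgrp S D c →+ Ggrp S D :=
    (AddEquiv.addSubgroupCongr (map_forgetW_Hgrp D c hpsi)).toAddMonoidHom.comp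
      (forgetW.toAddMonoidHom.addSubgroupMap (Hgrp S D c))
  have hker : ∀ g : Hgrp S D c, h g = 0 ↔ ∃ m : ℤ, (g : Fsp') = m • what := fun g => by
    refine ⟨fun hg => exists_eq_zsmul_what_of_mem_Hgrp D c g.2 (congrArg Subtype.val hg), ?_⟩
    rintro ⟨m, hm⟩
    ext1
    simp [h, hm]
  refine ⟨h, fun β _ _ => forgetW_xhat β, fun δ _ n _ => ?_,
    fun g m hg => (hker g).2 ⟨m, hg⟩, ?_, hker, ?_⟩
  · simp [h, forgetW_zhat, hpsi]
  · exact (AddEquiv.addSubgroupCongr (map_forgetW_Hgrp D c hpsi)).surjective.comp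
      (forgetW.toAddMonoidHom.addSubgroupMap_surjective (Hgrp S D c))
  · rintro ⟨δ, hδ, n, hc⟩
    have hw := what_mem_Hgrp D c hS hδ hc
    refine ⟨hw, h.nonempty_ker_addEquiv_int (w := ⟨what, hw⟩) (fun m hm => ?_) fun g => ?_⟩
    · simpa [what_ne_zero] using congrArg Subtype.val hm
    · simp [hker, Subtype.ext_iff]

end
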